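/- The map Φ⁻¹(x,y,z) = (m(x,y), m(y,z), m(z,x)) with m the midpoint map of the solvable symmetric surface is a bijection of M³ = (ℝ²)³ onto itself. -/

import Mathlib

/-!
The first coordinates of `PhiInv` are half the pairwise sums of the first coordinates of the
three points, and the system `x + y = a, y + z = b, z + x = c` has exactly one solution since
`2 ≠ 0`. Once the first coordinates are known, the `cosh` weights are known and positive, so the
second coordinates are again determined by such a system.
-/

noncomputable def midM (x y : ℝ × ℝ) : ℝ × ℝ :=
  ((x.1 + y.1) / 2, (x.2 + y.2) / (2 * Real.cosh (2 * (x.1 - y.1))))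

noncomputable def PhiInv (p : (ℝ × ℝ) × (ℝ × ℝ) × (ℝ × ℝ)) :
    (ℝ × ℝ) × (ℝ × ℝ) × (ℝ × ℝ) :=
  (midM p.1 p.2.1, midM p.2.1 p.2.2, midM p.2.2 p.1)

section PairSums

variable {K : Type*} [Field K] [NeZero (2 : K)]

theorem eq_of_pairSums_eq {x y z x' y' z' : K} (hxy : x + y = x' + y') (hyz : y + z = y' + z')
    (hzx : z + x = z' + x') : x = x' ∧ y = y' ∧ z = z' := by
  have h2 : (2 : K) ≠ 0 := two_ne_zero
  refine ⟨?_, ?_, ?_⟩ <;> apply mul_left_cancel₀ h2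
  · linear_combination hxy - hyz + hzx
  · linear_combination hxy + hyz - hzx
  · linear_combination -hxy + hyz + hzx

theorem exists_pairSums_eq (a b c : K) : ∃ x y z : K, x + y = a ∧ y + z = b ∧ z + x = c :=
  ⟨(a - b + c) / 2, (a + b - c) / 2, (-a + b + c) / 2, by field_simp; ring,
    by field_simp; ring, by field_simp; ring⟩

end PairSums

open Real

theorem midM_eq_iff {x y m : ℝ × ℝ} :
    midM x y = m ↔ x.1 + y.1 = 2 * m.1 ∧ x.2 + y.2 = 2 * cosh (2 * (x.1 - y.1)) * m.2 := by
  have hcosh : 2 * cosh (2 * (x.1 - y.1)) ≠ 0 := by positivity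
  rw [midM, Prod.ext_iff, div_eq_iff two_ne_zero, div_eq_iff hcosh, mul_comm m.1, mul_comm m.2]

theorem PhiInv_eq_iff {x₁ x₂ y₁ y₂ z₁ z₂ a₁ a₂ b₁ b₂ c₁ c₂ : ℝ} :
    PhiInv ((x₁, x₂), (y₁, y₂), (z₁, z₂)) = ((a₁, a₂), (b₁, b₂), (c₁, c₂)) ↔
      (x₁ + y₁ = 2 * a₁ ∧ y₁ + z₁ = 2 * b₁ ∧ z₁ + x₁ = 2 * c₁) ∧
      (x₂ + y₂ = 2 * cosh (2 * (x₁ - y₁)) * a₂ ∧ y₂ + z₂ = 2 * cosh (2 * (y₁ - z₁)) * b₂ ∧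
        z₂ + x₂ = 2 * cosh (2 * (z₁ - x₁)) * c₂) := by
  simp only [PhiInv, Prod.mk.injEq, midM_eq_iff]
  tauto

theorem PhiInv_bijective : Function.Bijective PhiInv := by
  constructor
  · rintro ⟨⟨x₁, x₂⟩, ⟨y₁, y₂⟩, ⟨z₁, z₂⟩⟩ ⟨⟨x₁', x₂'⟩, ⟨y₁', y₂'⟩, ⟨z₁', z₂'⟩⟩ h
    generalize hq : PhiInv ((x₁', x₂'), (y₁', y₂'), (z₁', z₂')) = m at h
    obtain ⟨⟨a₁, a₂⟩, ⟨b₁, b₂⟩, ⟨c₁, c₂⟩⟩ := m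
    obtain ⟨⟨hxy₁, hyz₁, hzx₁⟩, hxy₂, hyz₂, hzx₂⟩ := PhiInv_eq_iff.1 h
    obtain ⟨⟨hxy₁', hyz₁', hzx₁'⟩, hxy₂', hyz₂', hzx₂'⟩ := PhiInv_eq_iff.1 hq
    obtain ⟨rfl, rfl, rfl⟩ :=
      eq_of_pairSums_eq (hxy₁.trans hxy₁'.symm) (hyz₁.trans hyz₁'.symm) (hzx₁.trans hzx₁'.symm)
    obtain ⟨rfl, rfl, rfl⟩ :=
      eq_of_pairSums_eq (hxy₂.trans hxy₂'.symm) (hyz₂.trans hyz₂'.symm) (hzx₂.trans hzx₂'.symm)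
    rfl
  · rintro ⟨⟨a₁, a₂⟩, ⟨b₁, b₂⟩, ⟨c₁, c₂⟩⟩
    obtain ⟨x₁, y₁, z₁, hfirst⟩ := exists_pairSums_eq (2 * a₁) (2 * b₁) (2 * c₁)
    obtain ⟨x₂, y₂, z₂, hsecond⟩ := exists_pairSums_eq (2 * cosh (2 * (x₁ - y₁)) * a₂)
      (2 * cosh (2 * (y₁ - z₁)) * b₂) (2 * cosh (2 * (z₁ - x₁)) * c₂)
    exact ⟨((x₁, x₂), (y₁, y₂), (z₁, z₂)), PhiInv_eq_iff.2 ⟨hfirst, hsecond⟩⟩
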